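/- Let A ∈ ℝ^{n×n} and C ∈ ℝ^{m×n}. Assume the pair (A,C) is observable and that C e^{tA} x0 → 0 as t → +∞ for every x0 ∈ ℝ^n. Then A is stable, and consequently e^{tA} x0 → 0 exponentially as t → +∞ for every x0 ∈ ℝ^n. -/

import Mathlib

open Matrix NormedSpace Filter

/-- The pair `(A,C)` is observable: for every `x0 ≠ 0` there exists `τ > 0` with
`C e^{τA} x0 ≠ 0`. -/
def IsObservable {n m : ℕ} (A : Matrix (Fin n) (Fin n) ℝ)
    (C : Matrix (Fin m) (Fin n) ℝ) : Prop :=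
  ∀ x0 : Fin n → ℝ, x0 ≠ 0 → ∃ τ : ℝ, 0 < τ ∧ C.mulVec ((NormedSpace.exp (τ • A)).mulVec x0) ≠ 0



noncomputable def obsMap {n m : ℕ} (A : Matrix (Fin n) (Fin n) ℝ) (C : Matrix (Fin m) (Fin n) ℝ)
    (t : ℝ) : (Fin n → ℝ) →ₗ[ℝ] (Fin m → ℝ) :=
  C.mulVecLin ∘ₗ (NormedSpace.exp (t • A)).mulVecLin

lemma obsMap_apply {n m : ℕ} (A : Matrix (Fin n) (Fin n) ℝ) (C : Matrix (Fin m) (Fin n) ℝ)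
    (t : ℝ) (x : Fin n → ℝ) : obsMap A C t x = C.mulVec ((NormedSpace.exp (t • A)).mulVec x) := rfl

lemma finite_obs {n m : ℕ} (A : Matrix (Fin n) (Fin n) ℝ) (C : Matrix (Fin m) (Fin n) ℝ)
    (hobs : IsObservable A C) :
    ∃ S : Finset ℝ, (∀ t ∈ S, 0 < t) ∧
      ∀ x : Fin n → ℝ, (∀ t ∈ S, obsMap A C t x = 0) → x = 0 := by
  set V : Finset ℝ → Submodule ℝ (Fin n → ℝ) :=
    fun S => ⨅ t ∈ S, LinearMap.ker (obsMap A C t) with hV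
  set D : Set ℕ := {d | ∃ S : Finset ℝ, (∀ t ∈ S, 0 < t) ∧ Module.finrank ℝ (V S) = d} with hD
  have hne : D.Nonempty := ⟨_, ∅, by simp, rfl⟩
  obtain ⟨S, hSpos, hSrank⟩ : sInf D ∈ D := Nat.sInf_mem hne
  refine ⟨S, hSpos, ?_⟩
  have hbot : V S = ⊥ := by
    by_contra hb
    obtain ⟨x, hxV, hx0⟩ := Submodule.exists_mem_ne_zero_of_ne_bot hb
    obtain ⟨τ, hτpos, hτne⟩ := hobs x hx0
    have hlt : V (insert τ S) < V S := by
      refine lt_of_le_of_ne ?_ ?_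
      · refine le_iInf₂ fun t ht => ?_
        exact iInf₂_le t (Finset.mem_insert_of_mem ht)
      · intro heq
        have hxK : x ∈ LinearMap.ker (obsMap A C τ) := by
          have : x ∈ V (insert τ S) := heq ▸ hxV
          simp only [hV, Submodule.mem_iInf] at this
          exact this τ (Finset.mem_insert_self τ S)
        exact hτne hxK
    have hfr : Module.finrank ℝ (V (insert τ S)) < sInf D := by
      rw [← hSrank]
      exact Submodule.finrank_lt_finrank_of_lt hlt
    have : Module.finrank ℝ (V (insert τ S)) ∈ D := by
      refine ⟨insert τ S, ?_, rfl⟩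
      intro t ht
      rcases Finset.mem_insert.1 ht with h | h
      · exact h ▸ hτpos
      · exact hSpos t h
    exact absurd (Nat.sInf_le this) (by omega)
  intro x hx
  have : x ∈ V S := by
    simp only [hV, Submodule.mem_iInf]
    intro t ht
    exact hx t ht
  rw [hbot] at this
  simpa using this

lemma semigroup_exp {n : ℕ} (A : Matrix (Fin n) (Fin n) ℝ) (s t : ℝ) :
    NormedSpace.exp ((s + t) • A) = NormedSpace.exp (s • A) * NormedSpace.exp (t • A) := by
  rw [add_smul]
  exact Matrix.exp_add_of_commute _ _ ((Commute.refl A).smul_left s |>.smul_right t)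

lemma state_decay {n m : ℕ} (A : Matrix (Fin n) (Fin n) ℝ) (C : Matrix (Fin m) (Fin n) ℝ)
    (S : Finset ℝ)
    (hS : ∀ x : Fin n → ℝ, (∀ t ∈ S, obsMap A C t x = 0) → x = 0)
    (hdecay : ∀ x0 : Fin n → ℝ,
      Tendsto (fun t : ℝ => C.mulVec ((NormedSpace.exp (t • A)).mulVec x0)) atTop (nhds 0))
    (x0 : Fin n → ℝ) :
    Tendsto (fun s : ℝ => (NormedSpace.exp (s • A)).mulVec x0) atTop (nhds 0) := by
  classical
  -- the combined observation map
  set Φ : (Fin n → ℝ) →ₗ[ℝ] ({t // t ∈ S} → Fin m → ℝ) :=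
    LinearMap.pi (fun t => obsMap A C t.1) with hΦ
  have hinj : Function.Injective Φ := by
    rw [← LinearMap.ker_eq_bot, LinearMap.ker_eq_bot']
    intro x hx
    refine hS x fun t ht => ?_
    exact congrFun hx ⟨t, ht⟩
  -- κ bound
  set e := LinearEquiv.ofInjective Φ hinj with he
  set ψ := LinearMap.toContinuousLinearMap (e.symm : LinearMap.range Φ →ₗ[ℝ] (Fin n → ℝ)) with hψ
  have hbound : ∀ x : Fin n → ℝ, ‖x‖ ≤ ‖ψ‖ * ‖Φ x‖ := by
    intro x
    have h1 : ψ ⟨Φ x, ⟨x, rfl⟩⟩ = x := by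
      have h0 : e x = ⟨Φ x, ⟨x, rfl⟩⟩ := by
        apply Subtype.ext
        simp [he, LinearEquiv.ofInjective_apply]
      have : e.symm (e x) = x := e.symm_apply_apply x
      rw [h0] at this
      simpa [hψ] using this
    calc ‖x‖ = ‖ψ ⟨Φ x, ⟨x, rfl⟩⟩‖ := by rw [h1]
    _ ≤ ‖ψ‖ * ‖(⟨Φ x, ⟨x, rfl⟩⟩ : LinearMap.range Φ)‖ := ψ.le_opNorm _
    _ = ‖ψ‖ * ‖Φ x‖ := rfl
  -- each observation component of the trajectory tends to 0
  have hcomp : Tendsto (fun s : ℝ => Φ ((NormedSpace.exp (s • A)).mulVec x0)) atTop (nhds 0) := by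
    rw [tendsto_pi_nhds]
    intro t
    have hshift : Tendsto (fun s : ℝ => t.1 + s) atTop atTop :=
      tendsto_atTop_add_const_left atTop t.1 tendsto_id
    have := (hdecay x0).comp hshift
    have heq : (fun s : ℝ => Φ ((NormedSpace.exp (s • A)).mulVec x0) t)
        = fun s : ℝ => C.mulVec ((NormedSpace.exp ((t.1 + s) • A)).mulVec x0) := by
      funext s
      simp only [hΦ, LinearMap.pi_apply, obsMap, LinearMap.comp_apply, Matrix.mulVecLin_apply]
      rw [semigroup_exp, ← Matrix.mulVec_mulVec]
    rw [heq]
    exact this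
  -- squeeze
  rw [tendsto_zero_iff_norm_tendsto_zero]
  have hnorm : Tendsto (fun s : ℝ => ‖ψ‖ * ‖Φ ((NormedSpace.exp (s • A)).mulVec x0)‖) atTop (nhds 0) := by
    have := (hcomp.norm)
    simpa using this.const_mul ‖ψ‖
  refine squeeze_zero (fun s => norm_nonneg _) (fun s => hbound _) hnorm


attribute [local instance] Matrix.linftyOpNormedAddCommGroup Matrix.linftyOpNormedRing
  Matrix.linftyOpNormedAlgebra

lemma exp_decay_of_state_decay {n : ℕ} (A : Matrix (Fin n) (Fin n) ℝ)
    (hstate : ∀ x0 : Fin n → ℝ,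
      Tendsto (fun s : ℝ => (NormedSpace.exp (s • A)).mulVec x0) atTop (nhds 0)) :
    ∃ c : ℝ, 0 < c ∧ ∃ μ : ℝ, 0 < μ ∧
      ∀ t : ℝ, 0 ≤ t → ∀ x0 : Fin n → ℝ,
        ‖(NormedSpace.exp (t • A)).mulVec x0‖ ≤ c * Real.exp (-μ * t) * ‖x0‖ := by
  classical
  -- the matrix norm tends to 0
  have hEnorm : Tendsto (fun s : ℝ => ‖NormedSpace.exp (s • A)‖) atTop (nhds 0) := by
    have hmaj : Tendsto (fun s : ℝ => ∑ i : Fin n, ∑ j : Fin n,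
        ‖(NormedSpace.exp (s • A)).mulVec (Pi.single j 1)‖) atTop (nhds 0) := by
      have : Tendsto (fun s : ℝ => ∑ i : Fin n, ∑ j : Fin n,
          ‖(NormedSpace.exp (s • A)).mulVec (Pi.single j 1)‖) atTop
          (nhds (∑ i : Fin n, ∑ j : Fin n, (0:ℝ))) := by
        refine tendsto_finset_sum _ fun i _ => tendsto_finset_sum _ fun j _ => ?_
        simpa using (hstate (Pi.single j 1)).norm
      simpa using this
    refine squeeze_zero (fun s => norm_nonneg _) (fun s => ?_) hmaj
    -- ‖M‖ ≤ ∑ i ∑ j ‖M i j‖ ≤ ∑ i ∑ j ‖M.mulVec (single j 1)‖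
    set M := NormedSpace.exp (s • A)
    calc ‖M‖ ≤ ∑ i : Fin n, ∑ j : Fin n, ‖M i j‖ := by
          rw [Matrix.linfty_opNorm_def]
          have h : (Finset.univ.sup fun i : Fin n => ∑ j, ‖M i j‖₊)
              ≤ ∑ i : Fin n, ∑ j, ‖M i j‖₊ :=
            Finset.sup_le fun i _ =>
              Finset.single_le_sum (f := fun i : Fin n => ∑ j, ‖M i j‖₊) (fun _ _ => zero_le) (Finset.mem_univ i)
          calc ((Finset.univ.sup fun i : Fin n => ∑ j, ‖M i j‖₊ : NNReal) : ℝ)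
              ≤ ((∑ i : Fin n, ∑ j, ‖M i j‖₊ : NNReal) : ℝ) := by exact_mod_cast h
          _ = ∑ i : Fin n, ∑ j : Fin n, ‖M i j‖ := by
              push_cast
              rfl
    _ ≤ ∑ i : Fin n, ∑ j : Fin n, ‖M.mulVec (Pi.single j 1)‖ := by
          refine Finset.sum_le_sum fun i _ => Finset.sum_le_sum fun j _ => ?_
          have : M i j = M.mulVec (Pi.single j 1) i := by
            simp [Matrix.mulVec_single]
          rw [this]
          exact norm_le_pi_norm _ i
  -- choose t0 with small norm
  obtain ⟨t0, ht0ge, ht0half⟩ : ∃ t0 : ℝ, 1 ≤ t0 ∧ ‖NormedSpace.exp (t0 • A)‖ ≤ 1 / 2 := by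
    have h1 : ∀ᶠ s : ℝ in atTop, ‖NormedSpace.exp (s • A)‖ ≤ 1 / 2 := by
      filter_upwards [hEnorm.eventually_lt_const (by norm_num : (0:ℝ) < 1/2)] with s hs
      exact hs.le
    obtain ⟨s, hs1, hs2⟩ := (eventually_ge_atTop (1:ℝ)).and h1 |>.exists
    exact ⟨s, hs1, hs2⟩
  have ht0pos : (0:ℝ) < t0 := lt_of_lt_of_le one_pos ht0ge
  -- bound on [0, t0]
  have hcont : ContinuousOn (fun s : ℝ => NormedSpace.exp (s • A)) (Set.Icc 0 t0) :=
    (exp_continuous.comp (continuous_id.smul continuous_const)).continuousOn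
  obtain ⟨M0, hM0⟩ := isCompact_Icc.exists_bound_of_continuousOn hcont
  set c0 : ℝ := max M0 1 with hc0
  have hc0pos : (0:ℝ) < c0 := lt_of_lt_of_le one_pos (le_max_right _ _)
  have hM0c0 : ∀ s ∈ Set.Icc (0:ℝ) t0, ‖NormedSpace.exp (s • A)‖ ≤ c0 :=
    fun s hs => (hM0 s hs).trans (le_max_left _ _)
  set μ : ℝ := Real.log 2 / t0 with hμ
  have hμpos : 0 < μ := div_pos (Real.log_pos one_lt_two) ht0pos
  refine ⟨2 * c0, by positivity, μ, hμpos, ?_⟩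
  -- key estimate by induction
  have key : ∀ k : ℕ, ∀ s ∈ Set.Icc (0:ℝ) t0,
      ‖NormedSpace.exp ((k * t0 + s) • A)‖ ≤ (1/2) ^ k * c0 := by
    intro k
    induction k with
    | zero => intro s hs; simpa using hM0c0 s hs
    | succ k ih =>
      intro s hs
      have hsplit : ((k + 1 : ℕ) * t0 + s : ℝ) = t0 + (k * t0 + s) := by push_cast; ring
      rw [hsplit, semigroup_exp]
      calc ‖NormedSpace.exp (t0 • A) * NormedSpace.exp ((k * t0 + s) • A)‖
          ≤ ‖NormedSpace.exp (t0 • A)‖ * ‖NormedSpace.exp ((k * t0 + s) • A)‖ := norm_mul_le _ _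
        _ ≤ (1/2) * ((1/2) ^ k * c0) := by
            apply mul_le_mul ht0half (ih s hs) (norm_nonneg _) (by norm_num)
        _ = (1/2) ^ (k+1) * c0 := by ring
  intro t ht x0
  set k : ℕ := ⌊t / t0⌋₊ with hk
  have hkle : (k : ℝ) * t0 ≤ t := by
    have := Nat.floor_le (div_nonneg ht ht0pos.le)
    calc (k:ℝ) * t0 ≤ (t / t0) * t0 := by nlinarith
      _ = t := div_mul_cancel₀ t ht0pos.ne'
  have hklt : t < ((k:ℝ) + 1) * t0 := by
    have := Nat.lt_floor_add_one (t / t0)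
    calc t = (t / t0) * t0 := (div_mul_cancel₀ t ht0pos.ne').symm
      _ < ((k:ℝ) + 1) * t0 := by nlinarith
  have hmem : t - k * t0 ∈ Set.Icc (0:ℝ) t0 := by
    constructor <;> nlinarith
  have hE : ‖NormedSpace.exp (t • A)‖ ≤ (1/2) ^ k * c0 := by
    have := key k (t - k * t0) hmem
    have heq : ((k:ℝ) * t0 + (t - k * t0)) = t := by ring
    rwa [heq] at this
  have hpow : ((1:ℝ)/2) ^ k ≤ 2 * Real.exp (-μ * t) := by
    have h1 : ((1:ℝ)/2) ^ k = Real.exp ((k:ℝ) * Real.log (1/2)) := by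
      rw [Real.exp_nat_mul, Real.exp_log (by norm_num : (0:ℝ) < 1/2)]
    have hlog : Real.log (1/2 : ℝ) = -Real.log 2 := by
      rw [one_div, Real.log_inv]
    have h2 : (k:ℝ) * Real.log (1/2) ≤ (t / t0 - 1) * (-Real.log 2) := by
      rw [hlog]
      have hl2 : (0:ℝ) < Real.log 2 := Real.log_pos one_lt_two
      have : t / t0 - 1 ≤ (k:ℝ) := by
        have h4 : t / t0 < (k:ℝ) + 1 := (div_lt_iff₀ ht0pos).mpr (by nlinarith)
        linarith
      nlinarith
    have h3 : (t / t0 - 1) * (-Real.log 2) = Real.log 2 + (-μ * t) := by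
      rw [hμ]
      ring
    calc ((1:ℝ)/2) ^ k = Real.exp ((k:ℝ) * Real.log (1/2)) := h1
      _ ≤ Real.exp ((t / t0 - 1) * (-Real.log 2)) := Real.exp_le_exp.2 h2
      _ = Real.exp (Real.log 2) * Real.exp (-μ * t) := by rw [h3, Real.exp_add]
      _ = 2 * Real.exp (-μ * t) := by rw [Real.exp_log two_pos]
  calc ‖(NormedSpace.exp (t • A)).mulVec x0‖ ≤ ‖NormedSpace.exp (t • A)‖ * ‖x0‖ :=
        Matrix.linfty_opNorm_mulVec _ _
    _ ≤ ((1/2) ^ k * c0) * ‖x0‖ := by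
        apply mul_le_mul_of_nonneg_right hE (norm_nonneg _)
    _ ≤ (2 * Real.exp (-μ * t) * c0) * ‖x0‖ := by
        have := mul_le_mul_of_nonneg_right hpow hc0pos.le
        nlinarith [norm_nonneg x0, Real.exp_pos (-μ * t), hc0pos]
    _ = 2 * c0 * Real.exp (-μ * t) * ‖x0‖ := by ring

lemma eig_neg {n : ℕ} (A : Matrix (Fin n) (Fin n) ℝ) (c μ : ℝ) (hμ : 0 < μ)
    (hexp : ∀ t : ℝ, 0 ≤ t → ∀ x0 : Fin n → ℝ,
      ‖(NormedSpace.exp (t • A)).mulVec x0‖ ≤ c * Real.exp (-μ * t) * ‖x0‖)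
    (z : ℂ) (hz : (z • (1 : Matrix (Fin n) (Fin n) ℂ) - A.map Complex.ofReal).det = 0) :
    z.re < 0 := by
  classical
  by_contra hre
  push_neg at hre
  set Aℂ : Matrix (Fin n) (Fin n) ℂ := A.map Complex.ofReal with hAℂ
  obtain ⟨v, hv0, hv⟩ := Matrix.exists_mulVec_eq_zero_iff.mpr hz
  have heig : Aℂ.mulVec v = z • v := by
    have := hv
    rw [Matrix.sub_mulVec, sub_eq_zero, Matrix.smul_mulVec, Matrix.one_mulVec] at this
    exact this.symm
  have hpow : ∀ k : ℕ, (Aℂ ^ k).mulVec v = z ^ k • v := by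
    intro k
    induction k with
    | zero => simp [Matrix.one_mulVec]
    | succ k ih =>
      rw [pow_succ, ← Matrix.mulVec_mulVec, heig, Matrix.mulVec_smul, ih, smul_smul, pow_succ]
      ring_nf
  -- exp applied to eigenvector
  have hexpv : ∀ t : ℝ, (NormedSpace.exp ((t : ℂ) • Aℂ)).mulVec v = Complex.exp (t * z) • v := by
    intro t
    set L : Matrix (Fin n) (Fin n) ℂ →ₗ[ℂ] (Fin n → ℂ) :=
      { toFun := fun M => M.mulVec v
        map_add' := fun M N => Matrix.add_mulVec M N v
        map_smul' := fun r M => Matrix.smul_mulVec r M v } with hL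
    have hLc : Continuous L := L.continuous_of_finiteDimensional
    have hsum : Summable fun k : ℕ => ((k.factorial : ℂ))⁻¹ • ((t : ℂ) • Aℂ) ^ k :=
      expSeries_summable' (𝕂 := ℂ) _
    rw [exp_eq_tsum ℂ]
    have h2 : L (∑' k : ℕ, ((k.factorial : ℂ))⁻¹ • ((t : ℂ) • Aℂ) ^ k)
        = ∑' k : ℕ, L (((k.factorial : ℂ))⁻¹ • ((t : ℂ) • Aℂ) ^ k) :=
      hsum.hasSum.map L hLc |>.tsum_eq.symm
    have h3 : ∀ k : ℕ, L (((k.factorial : ℂ))⁻¹ • ((t : ℂ) • Aℂ) ^ k)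
        = (((k.factorial : ℂ))⁻¹ * (t * z) ^ k) • v := by
      intro k
      rw [_root_.map_smul]
      simp only [hL, LinearMap.coe_mk, AddHom.coe_mk, RingHom.id_apply]
      rw [smul_pow, Matrix.smul_mulVec, hpow, mul_pow]
      rw [smul_smul, smul_smul]
      ring_nf
    have h4 : Summable fun k : ℕ => ((k.factorial : ℂ))⁻¹ * (t * z) ^ k := by
      have := expSeries_summable' (𝕂 := ℂ) (𝔸 := ℂ) (t * z)
      simpa [smul_eq_mul] using this
    calc L (∑' k : ℕ, ((k.factorial : ℂ))⁻¹ • ((t : ℂ) • Aℂ) ^ k)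
        = ∑' k : ℕ, (((k.factorial : ℂ))⁻¹ * (t * z) ^ k) • v := by
          rw [h2]; exact tsum_congr h3
      _ = (∑' k : ℕ, ((k.factorial : ℂ))⁻¹ * (t * z) ^ k) • v := h4.tsum_smul_const v
      _ = Complex.exp (t * z) • v := by
          congr 1
          rw [Complex.exp_eq_exp_ℂ, exp_eq_tsum ℂ]
          simp [smul_eq_mul]
  -- relate real and complex exponentials
  have hreal : ∀ t : ℝ, (NormedSpace.exp (t • A)).map Complex.ofReal = NormedSpace.exp ((t : ℂ) • Aℂ) := by
    intro t
    have h1 : (NormedSpace.exp (t • A)).map Complex.ofReal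
        = NormedSpace.exp ((t • A).map Complex.ofReal) := by
      have := map_exp (Complex.ofRealHom.mapMatrix :
          Matrix (Fin n) (Fin n) ℝ →+* Matrix (Fin n) (Fin n) ℂ)
        (by exact continuous_id.matrix_map Complex.continuous_ofReal) (t • A)
      exact this
    have h2 : (t • A).map Complex.ofReal = (t : ℂ) • Aℂ := by
      ext i j
      simp [hAℂ, Complex.real_smul]
    have h3 : NormedSpace.exp ((t : ℂ) • Aℂ) = NormedSpace.exp ((t : ℂ) • Aℂ) :=
      rfl
    rw [h1, h2, h3]
  -- contradiction
  obtain ⟨j, hj⟩ := Function.ne_iff.mp hv0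
  have hvj : 0 < ‖v j‖ := norm_pos_iff.mpr hj
  set Vs : ℝ := ∑ k : Fin n, ‖v k‖ with hVs
  have hub : ∀ t : ℝ, 0 ≤ t → ‖v j‖ ≤ c * Real.exp (-μ * t) * Vs := by
    intro t ht
    have hcomp : ((NormedSpace.exp (t • A)).map Complex.ofReal).mulVec v j = Complex.exp (t * z) * v j := by
      rw [hreal, hexpv]
      simp [smul_eq_mul]
    have hge : ‖v j‖ ≤ ‖((NormedSpace.exp (t • A)).map Complex.ofReal).mulVec v j‖ := by
      rw [hcomp, norm_mul]
      have habs : ‖Complex.exp ((t:ℂ) * z)‖ = Real.exp (((t:ℂ) * z).re) := by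
        rw [Complex.norm_exp]
      rw [habs]
      have : 0 ≤ (↑t * z).re := by
        simp [Complex.mul_re]
        positivity
      nlinarith [Real.one_le_exp this, norm_nonneg (v j)]
    have hentry : ∀ i k, ‖(NormedSpace.exp (t • A)) i k‖ ≤ c * Real.exp (-μ * t) := by
      intro i k
      have h1 : (NormedSpace.exp (t • A)) i k = (NormedSpace.exp (t • A)).mulVec (Pi.single k 1) i := by
        simp [Matrix.mulVec_single]
      have h2 : ‖(NormedSpace.exp (t • A)).mulVec (Pi.single k 1)‖
          ≤ c * Real.exp (-μ * t) * ‖(Pi.single k 1 : Fin n → ℝ)‖ := hexp t ht _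
      have h3 : ‖(Pi.single k 1 : Fin n → ℝ)‖ ≤ 1 := by
        apply pi_norm_le_iff_of_nonneg zero_le_one |>.mpr
        intro i'
        rcases eq_or_ne i' k with h | h <;> simp [h, Pi.single_apply]
      have h4 : ‖(NormedSpace.exp (t • A)) i k‖ ≤ ‖(NormedSpace.exp (t • A)).mulVec (Pi.single k 1)‖ := by
        rw [h1]; exact norm_le_pi_norm _ i
      have h3e : ‖(Pi.single k 1 : Fin n → ℝ)‖ = 1 :=
        le_antisymm h3 (by simpa using norm_le_pi_norm (Pi.single k 1 : Fin n → ℝ) k)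
      rw [h3e, mul_one] at h2
      exact h4.trans h2
    calc ‖v j‖ ≤ ‖((NormedSpace.exp (t • A)).map Complex.ofReal).mulVec v j‖ := hge
      _ ≤ ∑ k : Fin n, ‖((NormedSpace.exp (t • A)) j k : ℂ)‖ * ‖v k‖ := by
          rw [Matrix.mulVec, dotProduct]
          refine (norm_sum_le _ _).trans ?_
          refine Finset.sum_le_sum fun k _ => ?_
          rw [norm_mul]
          simp [Matrix.map_apply]
      _ ≤ ∑ k : Fin n, (c * Real.exp (-μ * t)) * ‖v k‖ := by
          refine Finset.sum_le_sum fun k _ => ?_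
          have := hentry j k
          have h5 : ‖((NormedSpace.exp (t • A)) j k : ℂ)‖ = ‖(NormedSpace.exp (t • A)) j k‖ := by
            simp
          rw [h5]
          exact mul_le_mul_of_nonneg_right this (norm_nonneg _)
      _ = c * Real.exp (-μ * t) * Vs := by rw [hVs, ← Finset.mul_sum]
  -- but RHS tends to 0
  have htend : Tendsto (fun t : ℝ => c * Real.exp (-μ * t) * Vs) atTop (nhds 0) := by
    have h1 : Tendsto (fun t : ℝ => -μ * t) atTop atBot :=
      Tendsto.const_mul_atTop_of_neg (neg_lt_zero.mpr hμ) tendsto_id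
    have h2 := Real.tendsto_exp_atBot.comp h1
    have := (h2.const_mul c).mul_const Vs
    simpa using this
  obtain ⟨t, ht0, htlt⟩ := ((eventually_ge_atTop (0:ℝ)).and
    (htend.eventually_lt_const hvj)).exists
  exact absurd (hub t ht0) (not_le.mpr htlt)


/-- If `(A,C)` is observable and `C e^{tA} x0 → 0` as `t → ∞` for every
`x0`, then `A` is stable (every eigenvalue has negative real part) and consequently
`e^{tA} x0 → 0` exponentially. -/
theorem statement_13 (n m : ℕ) (A : Matrix (Fin n) (Fin n) ℝ)
    (C : Matrix (Fin m) (Fin n) ℝ)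
    (hobs : IsObservable A C)
    (hdecay : ∀ x0 : Fin n → ℝ,
      Tendsto (fun t : ℝ => C.mulVec ((NormedSpace.exp (t • A)).mulVec x0)) atTop (nhds 0)) :
    (∀ z : ℂ, (z • (1 : Matrix (Fin n) (Fin n) ℂ) - A.map Complex.ofReal).det = 0 →
      z.re < 0) ∧
    ∃ c : ℝ, 0 < c ∧ ∃ μ : ℝ, 0 < μ ∧
      ∀ t : ℝ, 0 ≤ t → ∀ x0 : Fin n → ℝ,
        ‖(NormedSpace.exp (t • A)).mulVec x0‖ ≤ c * Real.exp (-μ * t) * ‖x0‖ := by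
  obtain ⟨S, hSpos, hS⟩ := finite_obs A C hobs
  have hstate := state_decay A C S hS hdecay
  obtain ⟨c, hc, μ, hμ, hbd⟩ := exp_decay_of_state_decay A hstate
  exact ⟨fun z hz => eig_neg A c μ hμ hbd z hz, c, hc, μ, hμ, hbd⟩
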